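/- Let A, B ∈ ℝ^{n×n}. Then every matrix in the interval hull I(A,B) is an almost P-matrix of the second category if and only if I_u and I_z are almost P-matrices of the second category for all z ∈ {±1}^n, where (I_u)_{ij} = max(a_{ij}, b_{ij}) and I_z = I_c − D_z Δ D_z with I_c = (A+B)/2, Δ = (I_u − I_l)/2. -/

import Mathlib

open Matrix Finset

def IsPMatrix {n : ℕ} (A : Matrix (Fin n) (Fin n) ℝ) : Prop :=
  ∀ s : Finset (Fin n),
    0 < (A.submatrix (fun i : s => (i : Fin n)) (fun j : s => (j : Fin n))).det

def IsNMatrix {n : ℕ} (A : Matrix (Fin n) (Fin n) ℝ) : Prop :=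
  ∀ s : Finset (Fin n), s.Nonempty →
    (A.submatrix (fun i : s => (i : Fin n)) (fun j : s => (j : Fin n))).det < 0

def IsAlmostPMatrix {n : ℕ} (A : Matrix (Fin n) (Fin n) ℝ) : Prop :=
  (∀ s : Finset (Fin n), s.Nonempty → s ≠ Finset.univ →
    0 < (A.submatrix (fun i : s => (i : Fin n)) (fun j : s => (j : Fin n))).det) ∧
  A.det < 0

def IntervalHull {m n : ℕ} (A B : Matrix (Fin m) (Fin n) ℝ) :
    Set (Matrix (Fin m) (Fin n) ℝ) :=
  {C | ∀ i j, ∃ t : ℝ, t ∈ Set.Icc (0:ℝ) 1 ∧ C i j = t * A i j + (1 - t) * B i j}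

noncomputable def Iu {m n : ℕ} (A B : Matrix (Fin m) (Fin n) ℝ) : Matrix (Fin m) (Fin n) ℝ :=
  fun i j => max (A i j) (B i j)

noncomputable def Il {m n : ℕ} (A B : Matrix (Fin m) (Fin n) ℝ) : Matrix (Fin m) (Fin n) ℝ :=
  fun i j => min (A i j) (B i j)

noncomputable def Ic {m n : ℕ} (A B : Matrix (Fin m) (Fin n) ℝ) : Matrix (Fin m) (Fin n) ℝ :=
  fun i j => (A i j + B i j) / 2

noncomputable def Dlt {m n : ℕ} (A B : Matrix (Fin m) (Fin n) ℝ) : Matrix (Fin m) (Fin n) ℝ :=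
  fun i j => (Iu A B i j - Il A B i j) / 2

noncomputable def Iz {n : ℕ} (A B : Matrix (Fin n) (Fin n) ℝ) (z : Fin n → ℝ) :
    Matrix (Fin n) (Fin n) ℝ :=
  Ic A B - Matrix.diagonal z * Dlt A B * Matrix.diagonal z

def SignVec {n : ℕ} (z : Fin n → ℝ) : Prop := ∀ i, z i = 1 ∨ z i = -1

def BlockPattern {n : ℕ} (A : Matrix (Fin n) (Fin n) ℝ) (J : Finset (Fin n)) : Prop :=
  (∀ i ∈ J, ∀ j ∈ J, A i j < 0) ∧ (∀ i ∉ J, ∀ j ∉ J, A i j < 0) ∧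
  (∀ i ∈ J, ∀ j ∉ J, 0 < A i j) ∧ (∀ i ∉ J, ∀ j ∈ J, 0 < A i j)

def IsNMatrixSecond {n : ℕ} (A : Matrix (Fin n) (Fin n) ℝ) : Prop :=
  IsNMatrix A ∧ ∀ i j, A i j ≤ 0

def IsNMatrixFirst {n : ℕ} (A : Matrix (Fin n) (Fin n) ℝ) (J : Finset (Fin n)) : Prop :=
  IsNMatrix A ∧ BlockPattern A J

def IsAlmostPSecond {n : ℕ} (A : Matrix (Fin n) (Fin n) ℝ) : Prop :=
  IsUnit A.det ∧ IsNMatrix A⁻¹ ∧ ∀ i j, A⁻¹ i j < 0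

def IsAlmostPFirst {n : ℕ} (A : Matrix (Fin n) (Fin n) ℝ) (J : Finset (Fin n)) : Prop :=
  IsUnit A.det ∧ IsNMatrixFirst A⁻¹ J

def InJ {n : ℕ} (J : Finset (Fin n)) (x : Fin n → ℝ) : Prop :=
  (∀ j ∈ J, 0 < x j) ∧ (∀ j ∉ J, x j < 0)

def Semipos {p q : Type*} [Fintype q] (M : Matrix p q ℝ) : Prop :=
  ∃ x : q → ℝ, (∀ j, 0 ≤ x j) ∧ ∀ i, 0 < M.mulVec x i

def MinSemipos {m n : ℕ} (M : Matrix (Fin m) (Fin n) ℝ) : Prop :=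
  Semipos M ∧
  ∀ j₀ : Fin n, ¬ Semipos (M.submatrix id (fun j : {j : Fin n // j ≠ j₀} => (j : Fin n)))

/-!
By Kuttler's theorem, applied to `-Iu ≤ -C ≤ -Il` with `Il = Iz 1`, every `C` in the
hull is invertible with `C⁻¹ ≤ Il⁻¹ < 0`; as the hull is convex, `det C` has the sign of `det Iu`.
If a proper principal submatrix `C[s]` had nonpositive determinant, it would reverse the sign of
some `x ≠ 0`, and then so would `Iz[s]` for `z` the sign pattern of `x`. But `Iz[s]` is a
P-matrix, and P-matrices reverse the sign of no nonzero vector. Jacobi's identity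
`det M · det M⁻¹[s] = det M[sᶜ]` translates between the minors of `C` and those of `C⁻¹`.
-/

namespace Matrix

variable {m : Type*}

abbrev principalSubmatrix {R : Type*} (M : Matrix m m R) (s : Finset m) : Matrix s s R :=
  M.submatrix (fun i : s => (i : m)) (fun j : s => (j : m))

lemma det_principalSubmatrix_principalSubmatrix [DecidableEq m] (M : Matrix m m ℝ) (T : Finset m)
    (s : Finset T) :
    ((M.principalSubmatrix T).principalSubmatrix s).det
      = (M.principalSubmatrix (s.map (Function.Embedding.subtype _))).det := by
  rw [← det_submatrix_equiv_self (Finset.equivMap _ s)]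
  rfl

variable [Fintype m]

lemma mulVec_le_mulVec_of_le {P Q : Matrix m m ℝ} (hPQ : ∀ i j, P i j ≤ Q i j) {x : m → ℝ}
    (hx : 0 ≤ x) : P *ᵥ x ≤ Q *ᵥ x :=
  fun i => Finset.sum_le_sum fun k _ => mul_le_mul_of_nonneg_right (hPQ i k) (hx k)

lemma mulVec_mono_of_nonneg {P : Matrix m m ℝ} (hP : ∀ i j, 0 ≤ P i j) {x y : m → ℝ}
    (hxy : x ≤ y) : P *ᵥ x ≤ P *ᵥ y :=
  fun i => Finset.sum_le_sum fun k _ => mul_le_mul_of_nonneg_left (hxy k) (hP i k)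

lemma entry_nonneg_mul {P Q : Matrix m m ℝ} (hP : ∀ i j, 0 ≤ P i j) (hQ : ∀ i j, 0 ≤ Q i j)
    (i j : m) : 0 ≤ (P * Q) i j :=
  Finset.sum_nonneg fun k _ => mul_nonneg (hP i k) (hQ k j)

def ReversesSign (M : Matrix m m ℝ) (x : m → ℝ) : Prop := ∀ i, x i * (M *ᵥ x) i ≤ 0

lemma ReversesSign.of_mul_le {M N : Matrix m m ℝ} {x : m → ℝ} (hN : N.ReversesSign x)
    (hMN : ∀ i j, x i * x j * M i j ≤ x i * x j * N i j) : M.ReversesSign x := by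
  intro i
  refine le_trans ?_ (hN i)
  simp only [mulVec, dotProduct, Finset.mul_sum]
  exact Finset.sum_le_sum fun j _ => by linarith [hMN i j]

variable [DecidableEq m]

/-- With `x = x⁺ - x⁻`, the vector `w = B⁻¹ A x⁻` lies below both `x⁺` and `x⁻`, hence below `0`,
and then `x⁻ = A⁻¹ B w ≤ w ≤ 0`. -/
lemma nonneg_of_nonneg_mulVec_of_le_of_le {A B M : Matrix m m ℝ}
    (hAM : ∀ i j, A i j ≤ M i j) (hMB : ∀ i j, M i j ≤ B i j)
    (hA : IsUnit A.det) (hB : IsUnit B.det)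
    (hAi : ∀ i j, 0 ≤ A⁻¹ i j) (hBi : ∀ i j, 0 ≤ B⁻¹ i j) {x : m → ℝ} (hx : 0 ≤ M *ᵥ x) :
    0 ≤ x := by
  have hAB i j : A i j ≤ B i j := (hAM i j).trans (hMB i j)
  set u := x⁻
  set v := x⁺
  have hu : 0 ≤ u := negPart_nonneg x
  have hv : 0 ≤ v := posPart_nonneg x
  have hMuv : M *ᵥ u ≤ M *ᵥ v := by
    rw [← sub_nonneg, ← mulVec_sub, posPart_sub_negPart]; exact hx
  set w := B⁻¹ *ᵥ (A *ᵥ u)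
  have hBw : B *ᵥ w = A *ᵥ u := by
    rw [mulVec_mulVec, mul_nonsing_inv B hB, one_mulVec]
  have hwv : w ≤ v := by
    calc w ≤ B⁻¹ *ᵥ (B *ᵥ v) := mulVec_mono_of_nonneg hBi
            (((mulVec_le_mulVec_of_le hAM hu).trans hMuv).trans (mulVec_le_mulVec_of_le hMB hv))
      _ = v := by rw [mulVec_mulVec, nonsing_inv_mul B hB, one_mulVec]
  have hwu : w ≤ u := by
    calc w ≤ B⁻¹ *ᵥ (B *ᵥ u) := mulVec_mono_of_nonneg hBi (mulVec_le_mulVec_of_le hAB hu)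
      _ = u := by rw [mulVec_mulVec, nonsing_inv_mul B hB, one_mulVec]
  have hw : w ≤ 0 := (le_inf hwv hwu).trans_eq (posPart_inf_negPart_eq_zero x)
  have hu0 : u ≤ 0 := by
    have hBA : B *ᵥ w ≤ A *ᵥ w := by
      simpa [mulVec_neg] using mulVec_le_mulVec_of_le hAB (neg_nonneg.mpr hw)
    calc u = A⁻¹ *ᵥ (B *ᵥ w) := by rw [hBw, mulVec_mulVec, nonsing_inv_mul A hA, one_mulVec]
      _ ≤ A⁻¹ *ᵥ (A *ᵥ w) := mulVec_mono_of_nonneg hAi hBA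
      _ = w := by rw [mulVec_mulVec, nonsing_inv_mul A hA, one_mulVec]
      _ ≤ 0 := hw
  calc 0 ≤ v - u := by rw [le_antisymm hu0 hu, sub_zero]; exact hv
    _ = x := posPart_sub_negPart x

theorem isUnit_det_and_le_inv_of_inv_nonneg {A B M : Matrix m m ℝ}
    (hAM : ∀ i j, A i j ≤ M i j) (hMB : ∀ i j, M i j ≤ B i j)
    (hA : IsUnit A.det) (hB : IsUnit B.det)
    (hAi : ∀ i j, 0 ≤ A⁻¹ i j) (hBi : ∀ i j, 0 ≤ B⁻¹ i j) :
    IsUnit M.det ∧ ∀ i j, B⁻¹ i j ≤ M⁻¹ i j := by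
  have hmono {x : m → ℝ} : 0 ≤ M *ᵥ x → 0 ≤ x :=
    nonneg_of_nonneg_mulVec_of_le_of_le hAM hMB hA hB hAi hBi
  have hM : IsUnit M.det := by
    refine isUnit_iff_ne_zero.mpr fun h0 => ?_
    obtain ⟨x, hx0, hMx⟩ := exists_mulVec_eq_zero_iff.mpr h0
    have hneg : 0 ≤ -x := hmono (by rw [mulVec_neg, hMx, neg_zero])
    exact hx0 (le_antisymm (neg_nonneg.mp hneg) (hmono hMx.ge))
  have hMi i j : 0 ≤ M⁻¹ i j := by
    have hcol : 0 ≤ M⁻¹ *ᵥ Pi.single j 1 :=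
      hmono (by
        rw [mulVec_mulVec, mul_nonsing_inv M hM, one_mulVec]
        exact Pi.single_nonneg.mpr zero_le_one)
    simpa [mulVec_single_one] using hcol i
  have hdiff : M⁻¹ - B⁻¹ = M⁻¹ * (B - M) * B⁻¹ := by
    rw [Matrix.mul_sub, Matrix.sub_mul, Matrix.mul_assoc, mul_nonsing_inv B hB,
      nonsing_inv_mul M hM, Matrix.mul_one, Matrix.one_mul]
  refine ⟨hM, fun i j => sub_nonneg.mp ?_⟩
  rw [← sub_apply, hdiff]
  exact entry_nonneg_mul (entry_nonneg_mul hMi fun i j => sub_nonneg.mpr (hMB i j)) hBi i j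

lemma inv_neg_of_isUnit_det {A : Matrix m m ℝ} (hA : IsUnit A.det) : (-A)⁻¹ = -A⁻¹ :=
  inv_eq_left_inv (by rw [neg_mul_neg, nonsing_inv_mul A hA])

lemma isUnit_det_neg {A : Matrix m m ℝ} (hA : IsUnit A.det) : IsUnit (-A).det := by
  rw [det_neg]; exact ((isUnit_neg_one).pow _).mul hA

theorem isUnit_det_and_inv_le_of_inv_nonpos {A B M : Matrix m m ℝ}
    (hAM : ∀ i j, A i j ≤ M i j) (hMB : ∀ i j, M i j ≤ B i j)
    (hA : IsUnit A.det) (hB : IsUnit B.det)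
    (hAi : ∀ i j, A⁻¹ i j ≤ 0) (hBi : ∀ i j, B⁻¹ i j ≤ 0) :
    IsUnit M.det ∧ ∀ i j, M⁻¹ i j ≤ A⁻¹ i j := by
  obtain ⟨hM, hle⟩ := isUnit_det_and_le_inv_of_inv_nonneg (A := -B) (B := -A) (M := -M)
    (fun i j => neg_le_neg (hMB i j)) (fun i j => neg_le_neg (hAM i j))
    (isUnit_det_neg hB) (isUnit_det_neg hA)
    (by simpa [inv_neg_of_isUnit_det hB] using hBi) (by simpa [inv_neg_of_isUnit_det hA] using hAi)
  replace hM : IsUnit M.det := by simpa using isUnit_det_neg hM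
  refine ⟨hM, fun i j => ?_⟩
  simpa [inv_neg_of_isUnit_det hA, inv_neg_of_isUnit_det hM] using hle i j

lemma det_principalSubmatrix_univ (M : Matrix m m ℝ) :
    (M.principalSubmatrix Finset.univ).det = M.det :=
  det_submatrix_equiv_self (Equiv.subtypeUnivEquiv Finset.mem_univ) M

lemma det_add_diagonal (M : Matrix m m ℝ) (d : m → ℝ) :
    (M + diagonal d).det = ∑ s : Finset m, (∏ i ∈ sᶜ, d i) * (M.principalSubmatrix s).det := by
  let D := (detRowAlternating : (m → ℝ) [⋀^m]→ₗ[ℝ] ℝ)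
  have hsum :
      M + diagonal d = Matrix.of ((fun i => M i) + fun i => d i • (1 : Matrix m m ℝ) i) := by
    ext i j; by_cases hij : i = j <;> simp [hij]
  rw [hsum]
  change D ((fun i => M i) + fun i => d i • (1 : Matrix m m ℝ) i) = _
  rw [D.map_add_univ]
  refine Finset.sum_congr rfl fun s _ => ?_
  have hrows : s.piecewise (fun i => M i) (fun i => d i • (1 : Matrix m m ℝ) i)
      = fun i => (if i ∈ s then 1 else d i) • s.piecewise M.row (1 : Matrix m m ℝ).row i := by
    funext i
    by_cases hi : i ∈ s <;> simp [hi, Matrix.row, Finset.piecewise]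
  rw [hrows, D.map_smul_univ, ← det_piecewise_one_eq_submatrix_det M s, smul_eq_mul]
  congr 1
  rw [Finset.prod_ite, Finset.prod_const_one, one_mul]
  congr 1
  ext i; simp

lemma det_add_diagonal_pos {M : Matrix m m ℝ} (hM : ∀ s, 0 < (M.principalSubmatrix s).det)
    {d : m → ℝ} (hd : 0 ≤ d) : 0 < (M + diagonal d).det := by
  rw [det_add_diagonal]
  refine Finset.sum_pos' (fun s _ => mul_nonneg (Finset.prod_nonneg fun i _ => hd i) (hM s).le)
    ⟨Finset.univ, Finset.mem_univ _, ?_⟩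
  simpa using hM Finset.univ

/-- In blocks along `s ⊕ sᶜ`, `M * !![N₁₁, 0; N₂₁, 1] = !![1, M₁₂; 0, M₂₂]` where `N = M⁻¹`. -/
theorem det_mul_det_inv_principalSubmatrix (M : Matrix m m ℝ) (hM : IsUnit M.det)
    (s : Finset m) :
    M.det * (M⁻¹.principalSubmatrix s).det = (M.principalSubmatrix sᶜ).det := by
  let e : s ⊕ (sᶜ : Finset m) ≃ m :=
    (Equiv.sumCongr (Equiv.refl _) (Equiv.subtypeEquivRight fun _ => Finset.mem_compl)).trans
      (Equiv.sumCompl (· ∈ s))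
  set P := M.submatrix e e
  set Q := M⁻¹.submatrix e e
  have hPQ : P * Q = 1 := by
    rw [submatrix_mul_equiv, mul_nonsing_inv M hM, submatrix_one_equiv]
  rw [← fromBlocks_toBlocks P, ← fromBlocks_toBlocks Q, fromBlocks_multiply, ← fromBlocks_one,
    fromBlocks_inj] at hPQ
  obtain ⟨h₁₁, -, h₂₁, -⟩ := hPQ
  have hprod : P * fromBlocks Q.toBlocks₁₁ 0 Q.toBlocks₂₁ 1
      = fromBlocks 1 P.toBlocks₁₂ 0 P.toBlocks₂₂ := by
    conv_lhs => rw [← fromBlocks_toBlocks P]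
    rw [fromBlocks_multiply]
    simp [h₁₁, h₂₁]
  have hdet := congrArg det hprod
  rwa [det_mul, det_fromBlocks_zero₁₂, det_fromBlocks_zero₂₁, det_one, det_one, mul_one, one_mul,
    det_submatrix_equiv_self] at hdet

/-- `t ↦ det (t • 1 + M)` is a monic polynomial, so it vanishes at some `t ≥ 0` when
`det M ≤ 0`; a kernel vector of `t • 1 + M` is then reversed by `M`. -/
theorem exists_reversesSign_of_det_nonpos (M : Matrix m m ℝ) (h : M.det ≤ 0) :
    ∃ x ≠ 0, M.ReversesSign x := by
  have : Nonempty m := not_isEmpty_iff.mp fun _ => by norm_num at h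
  set p := (-M).charpoly
  have heval t : p.eval t = (scalar m t + M).det := by rw [eval_charpoly, sub_neg_eq_add]
  have hdeg : 0 < p.degree := by
    rw [← Polynomial.natDegree_pos_iff_degree_pos, charpoly_natDegree_eq_dim]
    exact Fintype.card_pos
  obtain ⟨t₁, ht₁, ht₁0⟩ := ((p.tendsto_atTop_of_leadingCoeff_nonneg hdeg
    (by rw [(charpoly_monic _).leadingCoeff]; exact zero_le_one)).eventually_ge_atTop 0 |>.and
    (Filter.eventually_ge_atTop 0)).exists
  obtain ⟨t, ⟨ht0, -⟩, ht⟩ := intermediate_value_Icc ht₁0 p.continuous.continuousOn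
    ⟨by rw [heval]; simpa using h, ht₁⟩
  obtain ⟨x, hx0, hx⟩ := exists_mulVec_eq_zero_iff.mpr ((heval t).symm.trans ht)
  refine ⟨x, hx0, fun i => ?_⟩
  have hxi : t * x i + (M *ᵥ x) i = 0 := by
    simpa [add_mulVec, scalar_apply, mulVec_diagonal] using congrFun hx i
  rw [show (M *ᵥ x) i = -(t * x i) by linarith]
  nlinarith [mul_nonneg ht0 (sq_nonneg (x i))]

/-- On the support `T` of a reversed vector `x`, the matrix `M[T] + diag (-(M x)ᵢ / xᵢ)` kills
`x`, although its determinant is positive. -/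
theorem not_reversesSign_of_det_principalSubmatrix_pos {M : Matrix m m ℝ}
    (hM : ∀ s, 0 < (M.principalSubmatrix s).det) {x : m → ℝ} (hx : x ≠ 0) :
    ¬ M.ReversesSign x := by
  intro hrev
  set T := Finset.univ.filter (x · ≠ 0)
  have hxT (i : T) : x i ≠ 0 := (Finset.mem_filter.mp i.2).2
  let y : T → ℝ := fun i => x i
  have hy : y ≠ 0 := by
    obtain ⟨i, hi⟩ := Function.ne_iff.mp hx
    exact Function.ne_iff.mpr ⟨⟨i, by simpa [T] using hi⟩, hi⟩
  have hMy (i : T) : (M.principalSubmatrix T *ᵥ y) i = (M *ᵥ x) i := by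
    simp only [mulVec, dotProduct, submatrix_apply, y]
    rw [Finset.sum_coe_sort T (fun j => M i j * x j), Finset.sum_filter_of_ne]
    exact fun j _ hj => right_ne_zero_of_mul hj
  let d : T → ℝ := fun i => -(M *ᵥ x) i / x i
  have hd : 0 ≤ d := fun i => by
    have hdi : d i = -(x i * (M *ᵥ x) i) / x i ^ 2 := by
      simp only [d]
      field_simp [hxT i]
    rw [hdi]
    exact div_nonneg (neg_nonneg.mpr (hrev i)) (sq_nonneg _)
  have hker : (M.principalSubmatrix T + diagonal d) *ᵥ y = 0 := by
    ext i
    rw [add_mulVec, Pi.add_apply, mulVec_diagonal, hMy]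
    simp [d, y, div_mul_cancel₀ _ (hxT i)]
  have hpos := det_add_diagonal_pos
    (fun s => (det_principalSubmatrix_principalSubmatrix M T s).trans_gt (hM _)) hd
  exact hpos.ne' (exists_mulVec_eq_zero_iff.mp ⟨y, hy, hker⟩)

theorem det_neg_of_forall_mem_segment {C D : Matrix m m ℝ}
    (h : ∀ X ∈ segment ℝ C D, X.det ≠ 0) (hD : D.det < 0) : C.det < 0 := by
  by_contra! hC
  obtain ⟨X, hX, hX0⟩ := (convex_segment C D).isPreconnected.intermediate_value
    (right_mem_segment ℝ C D) (left_mem_segment ℝ C D) (continuous_id.matrix_det).continuousOn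
    ⟨hD.le, hC⟩
  exact h X hX hX0

end Matrix

section AlmostP

variable {n : ℕ}

lemma det_neg_of_isNMatrix_inv [Nonempty (Fin n)] {M : Matrix (Fin n) (Fin n) ℝ}
    (h : IsNMatrix M⁻¹) : M.det < 0 := by
  have huniv := h Finset.univ Finset.univ_nonempty
  rwa [det_principalSubmatrix_univ, det_nonsing_inv, Ring.inverse_eq_inv', inv_lt_zero] at huniv

lemma det_principalSubmatrix_pos_of_isNMatrix_inv {M : Matrix (Fin n) (Fin n) ℝ}
    (hM : IsUnit M.det) (h : IsNMatrix M⁻¹) {s : Finset (Fin n)} (hs : s ≠ Finset.univ) :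
    0 < (M.principalSubmatrix s).det := by
  have hsc : sᶜ.Nonempty := (Finset.compl_ne_univ_iff_nonempty sᶜ).mp (by rwa [compl_compl])
  have : Nonempty (Fin n) := ⟨hsc.choose⟩
  rw [← compl_compl s, ← det_mul_det_inv_principalSubmatrix M hM]
  exact mul_pos_of_neg_of_neg (det_neg_of_isNMatrix_inv h) (h _ hsc)

lemma IsAlmostPMatrix.isNMatrix_inv {M : Matrix (Fin n) (Fin n) ℝ} (h : IsAlmostPMatrix M) :
    IsNMatrix M⁻¹ := by
  intro s hs
  rcases eq_or_ne s Finset.univ with rfl | hsu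
  · rw [det_principalSubmatrix_univ, det_nonsing_inv, Ring.inverse_eq_inv']
    exact inv_lt_zero.mpr h.2
  · have hsc : sᶜ.Nonempty := (Finset.compl_ne_univ_iff_nonempty sᶜ).mp (by rwa [compl_compl])
    have hpos := h.1 sᶜ hsc ((Finset.compl_ne_univ_iff_nonempty s).mpr hs)
    rw [← det_mul_det_inv_principalSubmatrix M h.2.ne.isUnit] at hpos
    exact neg_of_mul_pos_right hpos h.2.le

lemma isAlmostPSecond_of_isEmpty [IsEmpty (Fin n)] (M : Matrix (Fin n) (Fin n) ℝ) :
    IsAlmostPSecond M :=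
  ⟨by simp, fun s hs => (hs.ne_empty s.eq_empty_of_isEmpty).elim, fun i => isEmptyElim i⟩

end AlmostP

section IntervalHull

variable {n : ℕ} (A B : Matrix (Fin n) (Fin n) ℝ)

lemma exists_mem_Icc_eq_iff (a b c : ℝ) :
    (∃ t ∈ Set.Icc (0:ℝ) 1, c = t * a + (1 - t) * b) ↔ min a b ≤ c ∧ c ≤ max a b := by
  have h := Set.ext_iff.mp ((segment_eq_image ℝ b a).symm.trans (segment_eq_uIcc b a)) c
  simp only [Set.mem_image, smul_eq_mul, Set.uIcc, Set.mem_Icc] at h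
  rw [min_comm, max_comm, ← h]
  simp only [Set.mem_Icc, eq_comm, add_comm]

lemma mem_intervalHull_iff {C : Matrix (Fin n) (Fin n) ℝ} :
    C ∈ IntervalHull A B ↔ ∀ i j, Il A B i j ≤ C i j ∧ C i j ≤ Iu A B i j :=
  forall₂_congr fun _ _ => exists_mem_Icc_eq_iff _ _ _

lemma Il_eq_Ic_sub_Dlt (i j : Fin n) : Il A B i j = Ic A B i j - Dlt A B i j := by
  unfold Ic Dlt Iu Il; linarith [min_add_max (A i j) (B i j)]

lemma Iu_eq_Ic_add_Dlt (i j : Fin n) : Iu A B i j = Ic A B i j + Dlt A B i j := by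
  unfold Ic Dlt Iu Il; linarith [min_add_max (A i j) (B i j)]

lemma Dlt_nonneg (i j : Fin n) : 0 ≤ Dlt A B i j := by
  unfold Dlt Iu Il; linarith [min_le_max (a := A i j) (b := B i j)]

lemma mem_intervalHull_iff_abs_sub_Ic_le {C : Matrix (Fin n) (Fin n) ℝ} :
    C ∈ IntervalHull A B ↔ ∀ i j, |C i j - Ic A B i j| ≤ Dlt A B i j := by
  rw [mem_intervalHull_iff]
  refine forall₂_congr fun i j => ?_
  rw [abs_sub_le_iff, Il_eq_Ic_sub_Dlt, Iu_eq_Ic_add_Dlt]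
  constructor <;> rintro ⟨h₁, h₂⟩ <;> constructor <;> linarith

lemma convex_intervalHull : Convex ℝ (IntervalHull A B) := by
  intro X hX Y hY a b ha hb hab
  rw [mem_intervalHull_iff] at hX hY ⊢
  exact fun i j => convex_Icc (Il A B i j) (Iu A B i j) (hX i j) (hY i j) ha hb hab

lemma Iu_mem_intervalHull : Iu A B ∈ IntervalHull A B :=
  (mem_intervalHull_iff A B).mpr fun _ _ => ⟨min_le_max, le_rfl⟩

lemma Iz_apply (z : Fin n → ℝ) (i j : Fin n) :
    Iz A B z i j = Ic A B i j - z i * Dlt A B i j * z j := by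
  rw [Iz, Matrix.sub_apply, mul_diagonal, diagonal_mul]

lemma Iz_one : Iz A B 1 = Il A B := by
  ext i j
  rw [Iz_apply, Il_eq_Ic_sub_Dlt, Pi.one_apply, Pi.one_apply, one_mul, mul_one]

lemma Iz_mem_intervalHull {z : Fin n → ℝ} (hz : SignVec z) : Iz A B z ∈ IntervalHull A B := by
  have habs i : |z i| = 1 := by rcases hz i with h | h <;> simp [h]
  refine (mem_intervalHull_iff_abs_sub_Ic_le A B).mpr fun i j => ?_
  rw [Iz_apply, sub_sub_cancel_left, abs_neg, abs_mul, abs_mul, habs, habs, one_mul, mul_one,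
    abs_of_nonneg (Dlt_nonneg A B i j)]

lemma exists_signVec_mul_eq_abs (s : Finset (Fin n)) (x : s → ℝ) :
    ∃ z : Fin n → ℝ, SignVec z ∧ ∀ i : s, z i * x i = |x i| := by
  refine ⟨fun i => if h : i ∈ s then (if 0 ≤ x ⟨i, h⟩ then 1 else -1) else 1, fun i => ?_,
    fun i => ?_⟩
  · dsimp only
    split_ifs <;> simp
  · simp only [i.2, dif_pos]
    split_ifs with h
    · rw [one_mul, abs_of_nonneg h]
    · rw [neg_one_mul, abs_of_neg (not_le.mp h)]

/-- For `z` the sign pattern of `x`, `xᵢ xⱼ (Iz)ᵢⱼ = xᵢ xⱼ (Ic)ᵢⱼ - |xᵢ| |xⱼ| Δᵢⱼ ≤ xᵢ xⱼ cᵢⱼ`. -/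
lemma principalSubmatrix_Iz_reversesSign {C : Matrix (Fin n) (Fin n) ℝ}
    (hC : C ∈ IntervalHull A B) {s : Finset (Fin n)} {x : s → ℝ}
    (hx : (C.principalSubmatrix s).ReversesSign x) {z : Fin n → ℝ}
    (hz : ∀ i : s, z i * x i = |x i|) : ((Iz A B z).principalSubmatrix s).ReversesSign x := by
  refine hx.of_mul_le fun i j => ?_
  have hle : x i * x j * (Ic A B i j - C i j) ≤ |x i| * |x j| * Dlt A B i j :=
    calc _ ≤ |x i * x j * (Ic A B i j - C i j)| := le_abs_self _
      _ = |x i| * |x j| * |C i j - Ic A B i j| := by rw [abs_mul, abs_mul, abs_sub_comm]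
      _ ≤ _ := mul_le_mul_of_nonneg_left
          ((mem_intervalHull_iff_abs_sub_Ic_le A B).mp hC i j) (by positivity)
  rw [← hz i, ← hz j] at hle
  simp only [submatrix_apply, Iz_apply]
  linear_combination hle

theorem det_principalSubmatrix_pos_of_mem_intervalHull
    (hIz : ∀ z, SignVec z → IsAlmostPSecond (Iz A B z)) {C : Matrix (Fin n) (Fin n) ℝ}
    (hC : C ∈ IntervalHull A B) {s : Finset (Fin n)} (hs : s ≠ Finset.univ) :
    0 < (C.principalSubmatrix s).det := by
  by_contra! hdet
  obtain ⟨x, hx0, hx⟩ := exists_reversesSign_of_det_nonpos _ hdet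
  obtain ⟨z, hz, hzx⟩ := exists_signVec_mul_eq_abs s x
  refine not_reversesSign_of_det_principalSubmatrix_pos (fun t => ?_) hx0
    (principalSubmatrix_Iz_reversesSign A B hC hx hzx)
  have hts : t.map (Function.Embedding.subtype _) ⊆ s := fun a ha => by
    obtain ⟨b, -, rfl⟩ := Finset.mem_map.mp ha
    exact b.2
  rw [det_principalSubmatrix_principalSubmatrix]
  exact det_principalSubmatrix_pos_of_isNMatrix_inv (hIz z hz).1 (hIz z hz).2.1
    fun h => hs (Finset.univ_subset_iff.mp (h ▸ hts))

end IntervalHull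

theorem stmt13 {n : ℕ} (A B : Matrix (Fin n) (Fin n) ℝ) :
    (∀ C ∈ IntervalHull A B, IsAlmostPSecond C) ↔
      (IsAlmostPSecond (Iu A B) ∧
        ∀ z : Fin n → ℝ, SignVec z → IsAlmostPSecond (Iz A B z)) := by
  refine ⟨fun H => ⟨H _ (Iu_mem_intervalHull A B), fun z hz => H _ (Iz_mem_intervalHull A B hz)⟩,
    ?_⟩
  rintro ⟨hIu, hIz⟩ C hC
  rcases isEmpty_or_nonempty (Fin n) with _ | _
  · exact isAlmostPSecond_of_isEmpty C
  have hIl : IsAlmostPSecond (Il A B) := Iz_one A B ▸ hIz 1 fun _ => Or.inl rfl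
  have hhull : ∀ X ∈ IntervalHull A B, IsUnit X.det ∧ ∀ i j, X⁻¹ i j ≤ (Il A B)⁻¹ i j :=
    fun X hX => isUnit_det_and_inv_le_of_inv_nonpos
      (fun i j => ((mem_intervalHull_iff A B).mp hX i j).1)
      (fun i j => ((mem_intervalHull_iff A B).mp hX i j).2)
      hIl.1 hIu.1 (fun i j => (hIl.2.2 i j).le) (fun i j => (hIu.2.2 i j).le)
  obtain ⟨hCunit, hCinv⟩ := hhull C hC
  have hdet : C.det < 0 := det_neg_of_forall_mem_segment
    (fun X hX => (hhull X ((convex_intervalHull A B).segment_subset hC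
      (Iu_mem_intervalHull A B) hX)).1.ne_zero)
    (det_neg_of_isNMatrix_inv hIu.2.1)
  refine ⟨hCunit, IsAlmostPMatrix.isNMatrix_inv ⟨fun s _ hs =>
    det_principalSubmatrix_pos_of_mem_intervalHull A B hIz hC hs, hdet⟩,
    fun i j => (hCinv i j).trans_lt (hIl.2.2 i j)⟩
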